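/- For m > 0 and b⃗ ∈ ℝ³ \ {0}, t⃗, a⃗ ∈ ℝ³, define the charge map Ψ(m, b⃗, t⃗, a⃗) ∈ ℝ¹⁰ as 4πm times the vector with components: cosh|b⃗|; sinh|b⃗|·(b⃗/|b⃗|); cosh|b⃗|·t⃗ + sinh|b⃗|·(a⃗ × b⃗/|b⃗|); and cosh|b⃗|·(a⃗ − (a⃗·b̂)b̂) + (a⃗·b̂)b̂ − sinh|b⃗|·(t⃗ × b̂), where b̂ = b⃗/|b⃗|. Define φ₀ on vectors (m', b⃗', t⃗', a⃗') with 0 < |b⃗'| < m' by: mass component (1/4π)√((m')² − |b⃗'|²); boost component arctanh(|b⃗'|/m')·(b⃗'/|b⃗'|); translation component ((m')² − |b⃗'|²)⁻¹ (m' t⃗' − a⃗' × b⃗' − (1/m')(b⃗'·t⃗')b⃗'); rotation component ((m')² − |b⃗'|²)⁻¹ ( m'( a⃗' − (1 − √((m')² − |b⃗'|²)/m')(a⃗'·b̂')b̂' ) − b⃗' × t⃗' ) with b̂' = b⃗'/|b⃗'|. Then Ψ(φ₀(m', b⃗', t⃗', a⃗')) = (m', b⃗', t⃗', a⃗'), i.e.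 φ₀ is a right inverse of Ψ on its domain. -/

import Mathlib

/-!
The boost component of `φ₀` has length `r = artanh (|b'| / m')` and direction `b̂'`, so that
`cosh r = m' / μ` and `sinh r = |b'| / μ` with `μ = √(m'² - |b'|²)`, which is also `4π` times the
mass component. Substituting, the mass and boost components of `Ψ ∘ φ₀` collapse to `m'` and `b'`,
and the remaining two components become the linear map
`(t, a) ↦ (m' t + a × b', m' (a - P a) + μ P a - t × b')`, `P` the projection onto `ℝ b'`.
The translation and rotation components of `φ₀` invert it, by the vector triple product
expansion and `μ² = m'² - |b'|²`.
-/

noncomputable section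
open Matrix

/-- Euclidean norm of a vector in `ℝ³`. -/
def norm3 (v : Fin 3 → ℝ) : ℝ := Real.sqrt (v ⬝ᵥ v)

/-- Inverse hyperbolic tangent. -/
def artanh (s : ℝ) : ℝ := (1 / 2) * Real.log ((1 + s) / (1 - s))

/-- Mass component of the charge map `Ψ`: `4πm·cosh|b|`. -/
def chargeMass (m : ℝ) (b : Fin 3 → ℝ) : ℝ :=
  4 * Real.pi * m * Real.cosh (norm3 b)

/-- Boost component of the charge map `Ψ`: `4πm·sinh|b|·(b/|b|)`. -/
def chargeBoost (m : ℝ) (b : Fin 3 → ℝ) : Fin 3 → ℝ :=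
  (4 * Real.pi * m * Real.sinh (norm3 b) / norm3 b) • b

/-- Translation component of `Ψ`: `4πm(cosh|b|·t + sinh|b|·(a × b̂))`. -/
def chargeTrans (m : ℝ) (b t a : Fin 3 → ℝ) : Fin 3 → ℝ :=
  (4 * Real.pi * m) •
    (Real.cosh (norm3 b) • t + (Real.sinh (norm3 b) / norm3 b) • (crossProduct a b))

/-- Rotation component of `Ψ`:
`4πm(cosh|b|·(a − (a·b̂)b̂) + (a·b̂)b̂ − sinh|b|·(t × b̂))`. -/
def chargeRot (m : ℝ) (b t a : Fin 3 → ℝ) : Fin 3 → ℝ :=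
  (4 * Real.pi * m) •
    (Real.cosh (norm3 b) • (a - ((a ⬝ᵥ b) / (norm3 b) ^ 2) • b)
      + ((a ⬝ᵥ b) / (norm3 b) ^ 2) • b
      - (Real.sinh (norm3 b) / norm3 b) • (crossProduct t b))

/-- Mass component of `φ₀`: `(1/4π)√((m')² − |b'|²)`. -/
def phiMass (m' : ℝ) (b' : Fin 3 → ℝ) : ℝ :=
  Real.sqrt (m' ^ 2 - (norm3 b') ^ 2) / (4 * Real.pi)

/-- Boost component of `φ₀`: `arctanh(|b'|/m')·(b'/|b'|)`. -/
def phiBoost (m' : ℝ) (b' : Fin 3 → ℝ) : Fin 3 → ℝ :=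
  (artanh (norm3 b' / m') / norm3 b') • b'

/-- Translation component of `φ₀`:
`((m')² − |b'|²)⁻¹ (m' t' − a' × b' − (1/m')(b'·t')b')`. -/
def phiTrans (m' : ℝ) (b' t' a' : Fin 3 → ℝ) : Fin 3 → ℝ :=
  (m' ^ 2 - (norm3 b') ^ 2)⁻¹ •
    (m' • t' - crossProduct a' b' - (m'⁻¹ * (b' ⬝ᵥ t')) • b')

/-- Rotation component of `φ₀`:
`((m')² − |b'|²)⁻¹ (m'(a' − (1 − √((m')²−|b'|²)/m')(a'·b̂')b̂') − b' × t')`. -/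
def phiRot (m' : ℝ) (b' t' a' : Fin 3 → ℝ) : Fin 3 → ℝ :=
  (m' ^ 2 - (norm3 b') ^ 2)⁻¹ •
    (m' • (a' - ((1 - Real.sqrt (m' ^ 2 - (norm3 b') ^ 2) / m')
        * ((a' ⬝ᵥ b') / (norm3 b') ^ 2)) • b')
      - crossProduct b' t')

theorem norm3_sq (v : Fin 3 → ℝ) : norm3 v ^ 2 = v ⬝ᵥ v :=
  Real.sq_sqrt (dotProduct_self_star_nonneg v)

theorem norm3_smul (c : ℝ) (v : Fin 3 → ℝ) : norm3 (c • v) = |c| * norm3 v := by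
  rw [norm3, norm3, smul_dotProduct, dotProduct_smul, smul_eq_mul, smul_eq_mul, ← mul_assoc,
    ← sq, Real.sqrt_mul (sq_nonneg c), Real.sqrt_sq_eq_abs]

theorem artanh_eq_real_artanh {s : ℝ} (hs : s ∈ Set.Icc (-1) 1) : artanh s = Real.artanh s :=
  (Real.artanh_eq_half_log hs).symm

theorem sqrt_sq_sub_sq_pos {β M : ℝ} (hβ : 0 ≤ β) (hβM : β < M) : 0 < √(M ^ 2 - β ^ 2) :=
  Real.sqrt_pos.2 (by nlinarith)

theorem div_mem_Ioo_of_abs_lt {β M : ℝ} (hβM : |β| < M) : β / M ∈ Set.Ioo (-1) 1 := by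
  have hM : 0 < M := (abs_nonneg β).trans_lt hβM
  rw [Set.mem_Ioo, lt_div_iff₀ hM, div_lt_one hM]
  constructor <;> linarith [abs_lt.1 hβM]

theorem sqrt_one_sub_div_sq {β M : ℝ} (hM : 0 < M) :
    √(1 - (β / M) ^ 2) = √(M ^ 2 - β ^ 2) / M := by
  rw [show 1 - (β / M) ^ 2 = (M ^ 2 - β ^ 2) / M ^ 2 by field_simp, Real.sqrt_div' _ (sq_nonneg M),
    Real.sqrt_sq hM.le]

theorem cosh_artanh_div {β M : ℝ} (hβM : |β| < M) :
    Real.cosh (artanh (β / M)) = M / √(M ^ 2 - β ^ 2) := by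
  have hM : 0 < M := (abs_nonneg β).trans_lt hβM
  have hs := div_mem_Ioo_of_abs_lt hβM
  rw [artanh_eq_real_artanh (Set.Ioo_subset_Icc_self hs), Real.cosh_artanh hs,
    sqrt_one_sub_div_sq hM, one_div_div]

theorem sinh_artanh_div {β M : ℝ} (hβM : |β| < M) :
    Real.sinh (artanh (β / M)) = β / √(M ^ 2 - β ^ 2) := by
  have hM : 0 < M := (abs_nonneg β).trans_lt hβM
  have hs := div_mem_Ioo_of_abs_lt hβM
  rw [artanh_eq_real_artanh (Set.Ioo_subset_Icc_self hs), Real.sinh_artanh hs,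
    sqrt_one_sub_div_sq hM, div_div_eq_mul_div, div_mul_cancel₀ β hM.ne']

def proj3 (v a : Fin 3 → ℝ) : Fin 3 → ℝ := ((a ⬝ᵥ v) / norm3 v ^ 2) • v

section

variable {m' : ℝ} {b' : Fin 3 → ℝ}

theorem four_pi_mul_phiMass : 4 * Real.pi * phiMass m' b' = √(m' ^ 2 - norm3 b' ^ 2) := by
  rw [phiMass]
  field_simp

theorem artanh_div_pos (hb0 : 0 < norm3 b') (hbm : norm3 b' < m') :
    0 < artanh (norm3 b' / m') := by
  have hs := div_mem_Ioo_of_abs_lt (by rwa [abs_of_pos hb0])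
  rw [artanh_eq_real_artanh (Set.Ioo_subset_Icc_self hs)]
  exact Real.artanh_pos ⟨div_pos hb0 (hb0.trans hbm), hs.2⟩

theorem norm3_phiBoost (hb0 : 0 < norm3 b') (hbm : norm3 b' < m') :
    norm3 (phiBoost m' b') = artanh (norm3 b' / m') := by
  rw [phiBoost, norm3_smul, abs_div, abs_of_pos hb0, abs_of_pos (artanh_div_pos hb0 hbm),
    div_mul_cancel₀ _ hb0.ne']

theorem cosh_norm3_phiBoost (hb0 : 0 < norm3 b') (hbm : norm3 b' < m') :
    Real.cosh (norm3 (phiBoost m' b')) = m' / √(m' ^ 2 - norm3 b' ^ 2) := by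
  rw [norm3_phiBoost hb0 hbm, cosh_artanh_div (by rwa [abs_of_pos hb0])]

theorem sinh_norm3_phiBoost (hb0 : 0 < norm3 b') (hbm : norm3 b' < m') :
    Real.sinh (norm3 (phiBoost m' b')) = norm3 b' / √(m' ^ 2 - norm3 b' ^ 2) := by
  rw [norm3_phiBoost hb0 hbm, sinh_artanh_div (by rwa [abs_of_pos hb0])]

theorem chargeMass_phi (hb0 : 0 < norm3 b') (hbm : norm3 b' < m') :
    chargeMass (phiMass m' b') (phiBoost m' b') = m' := by
  have hμ := sqrt_sq_sub_sq_pos hb0.le hbm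
  rw [chargeMass, four_pi_mul_phiMass, cosh_norm3_phiBoost hb0 hbm]
  field_simp

theorem chargeBoost_phi (hb0 : 0 < norm3 b') (hbm : norm3 b' < m') :
    chargeBoost (phiMass m' b') (phiBoost m' b') = b' := by
  have hμ := sqrt_sq_sub_sq_pos hb0.le hbm
  have hr := artanh_div_pos hb0 hbm
  rw [chargeBoost, four_pi_mul_phiMass, sinh_norm3_phiBoost hb0 hbm, norm3_phiBoost hb0 hbm,
    phiBoost, smul_smul]
  convert one_smul ℝ b'
  field_simp

theorem chargeTrans_phi (hb0 : 0 < norm3 b') (hbm : norm3 b' < m') (t a : Fin 3 → ℝ) :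
    chargeTrans (phiMass m' b') (phiBoost m' b') t a = m' • t + a ⨯₃ b' := by
  have hμ := sqrt_sq_sub_sq_pos hb0.le hbm
  have hr := artanh_div_pos hb0 hbm
  rw [chargeTrans, four_pi_mul_phiMass, cosh_norm3_phiBoost hb0 hbm,
    sinh_norm3_phiBoost hb0 hbm, norm3_phiBoost hb0 hbm, phiBoost, map_smul]
  match_scalars <;> field_simp

theorem chargeRot_phi (hb0 : 0 < norm3 b') (hbm : norm3 b' < m') (t a : Fin 3 → ℝ) :
    chargeRot (phiMass m' b') (phiBoost m' b') t a =
      m' • (a - proj3 b' a) + √(m' ^ 2 - norm3 b' ^ 2) • proj3 b' a - t ⨯₃ b' := by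
  have hμ := sqrt_sq_sub_sq_pos hb0.le hbm
  have hr := artanh_div_pos hb0 hbm
  rw [chargeRot, four_pi_mul_phiMass, cosh_norm3_phiBoost hb0 hbm, sinh_norm3_phiBoost hb0 hbm,
    norm3_phiBoost hb0 hbm, phiBoost, proj3, map_smul, dotProduct_smul, smul_eq_mul]
  match_scalars <;> field_simp

theorem smul_phiTrans_add_phiRot_cross (hm : m' ≠ 0)
    (hD : m' ^ 2 - norm3 b' ^ 2 ≠ 0) (t' a' : Fin 3 → ℝ) :
    m' • phiTrans m' b' t' a' + phiRot m' b' t' a' ⨯₃ b' = t' := by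
  simp only [phiTrans, phiRot, map_smul, map_sub, LinearMap.smul_apply, LinearMap.sub_apply,
    cross_self, smul_zero, sub_zero, cross_cross_eq_smul_sub_smul, ← norm3_sq,
    dotProduct_comm t' b']
  match_scalars <;> field_simp <;> ring

theorem phiRot_dotProduct (hm : m' ≠ 0) (hb : norm3 b' ≠ 0)
    (t' a' : Fin 3 → ℝ) :
    phiRot m' b' t' a' ⬝ᵥ b' =
      (m' ^ 2 - norm3 b' ^ 2)⁻¹ * (√(m' ^ 2 - norm3 b' ^ 2) * (a' ⬝ᵥ b')) := by
  have hcross : b' ⨯₃ t' ⬝ᵥ b' = 0 := by rw [dotProduct_comm, dot_self_cross]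
  simp only [phiRot, smul_dotProduct, sub_dotProduct, smul_eq_mul, hcross, ← norm3_sq]
  field_simp
  ring

theorem smul_phiRot_sub_proj3_add_smul_proj3_sub_phiTrans_cross
    (hm : m' ≠ 0) (hb : norm3 b' ≠ 0) (hD : 0 < m' ^ 2 - norm3 b' ^ 2) (t' a' : Fin 3 → ℝ) :
    m' • (phiRot m' b' t' a' - proj3 b' (phiRot m' b' t' a'))
      + √(m' ^ 2 - norm3 b' ^ 2) • proj3 b' (phiRot m' b' t' a')
      - phiTrans m' b' t' a' ⨯₃ b' = a' := by
  have hS := Real.sq_sqrt hD.le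
  rw [proj3, phiRot_dotProduct hm hb]
  simp only [phiTrans, phiRot, map_smul, map_sub, LinearMap.smul_apply, LinearMap.sub_apply,
    cross_self, smul_zero, sub_zero, cross_cross_eq_smul_sub_smul, ← norm3_sq,
    ← cross_anticomm b' t']
  match_scalars <;> field_simp
  · linear_combination (a' ⬝ᵥ b') * hS
  · ring

end

theorem stmt_10_general (m' : ℝ) (b' t' a' : Fin 3 → ℝ)
    (hb0 : 0 < norm3 b') (hbm : norm3 b' < m') :
    chargeMass (phiMass m' b') (phiBoost m' b') = m' ∧
    chargeBoost (phiMass m' b') (phiBoost m' b') = b' ∧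
    chargeTrans (phiMass m' b') (phiBoost m' b')
      (phiTrans m' b' t' a') (phiRot m' b' t' a') = t' ∧
    chargeRot (phiMass m' b') (phiBoost m' b')
      (phiTrans m' b' t' a') (phiRot m' b' t' a') = a' := by
  have hm : m' ≠ 0 := (hb0.trans hbm).ne'
  have hD : 0 < m' ^ 2 - norm3 b' ^ 2 := by nlinarith
  refine ⟨chargeMass_phi hb0 hbm, chargeBoost_phi hb0 hbm, ?_, ?_⟩
  · rw [chargeTrans_phi hb0 hbm]
    exact smul_phiTrans_add_phiRot_cross hm hD.ne' t' a'
  · rw [chargeRot_phi hb0 hbm]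
    exact smul_phiRot_sub_proj3_add_smul_proj3_sub_phiTrans_cross hm hb0.ne' hD t' a'

/-- For `m' > 0` and `0 < |b'| < m'`, the map `φ₀` is a right inverse of
the charge map `Ψ`: `Ψ(φ₀(m', b', t', a')) = (m', b', t', a')`, componentwise. -/
theorem stmt_10 (m' : ℝ) (b' t' a' : Fin 3 → ℝ)
    (hm : 0 < m') (hb0 : 0 < norm3 b') (hbm : norm3 b' < m') :
    chargeMass (phiMass m' b') (phiBoost m' b') = m' ∧
    chargeBoost (phiMass m' b') (phiBoost m' b') = b' ∧
    chargeTrans (phiMass m' b') (phiBoost m' b')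
      (phiTrans m' b' t' a') (phiRot m' b' t' a') = t' ∧
    chargeRot (phiMass m' b') (phiBoost m' b')
      (phiTrans m' b' t' a') (phiRot m' b' t' a') = a' :=
  stmt_10_general m' b' t' a' hb0 hbm

end
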